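/- arXiv:1811.07448 — 2 statements merged into one kernel-verified Lean document; each statement's English description precedes it below -/
import Mathlib

section
/- Let G ∈ G(n,d,k,w) and let B be a G-block. Then |B| ≤ (w+2−k)^d, |B̄| ≤ (w+k)^d, and |∂B| ≤ 2d(k−1)(w+k)^{d−1}. -/
open Finset

/-- `I[:ℓ]`: the set of the `ℓ` smallest elements of `I` (or `I` itself if `|I| < ℓ`). -/
def takeSmallest (I : Finset ℕ) (ℓ : ℕ) : Finset ℕ :=
  I.filter fun x => (I.filter fun y => y ≤ x).card ≤ ℓ

/-- `I[ℓ+1:] = I \ I[:ℓ]`. -/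
def dropSmallest (I : Finset ℕ) (ℓ : ℕ) : Finset ℕ :=
  I \ takeSmallest I ℓ

/-- An `(n,w)`-interval partition: a partition of `[n] = {1,…,n}` into consecutive,
pairwise disjoint intervals `I_1, …, I_t`, each of size `w` or `w+1`, where for `j < j'`
every element of `I j` is smaller than every element of `I j'`. -/
structure IntervalPartition (n w : ℕ) where
  t : ℕ
  I : Fin t → Finset ℕ
  interval : ∀ j, ∃ a b, 1 ≤ a ∧ a ≤ b ∧ b ≤ n ∧ I j = Finset.Icc a b
  size : ∀ j, (I j).card = w ∨ (I j).card = w + 1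
  cover : ∀ x ∈ Finset.Icc 1 n, ∃ j, x ∈ I j
  ordered : ∀ j j' : Fin t, j < j' → ∀ x ∈ I j, ∀ y ∈ I j', x < y

/-- The hypergrid `[n]^d`, as a set of tuples. -/
def cube (n d : ℕ) : Set (Fin d → ℕ) :=
  {x | ∀ i, 1 ≤ x i ∧ x i ≤ n}

/-- The `(n,d,k,w)`-grid induced by an `(n,w)`-interval partition. -/
def gridOf (n d k w : ℕ) (P : IntervalPartition n w) : Set (Fin d → ℕ) :=
  {x ∈ cube n d | ∃ i : Fin d, ∃ j : Fin P.t, x i ∈ takeSmallest (P.I j) (k - 1)}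

/-- `G ∈ 𝒢(n,d,k,w)`: `G` is the grid induced by some `(n,w)`-interval partition. -/
def IsGrid (n d k w : ℕ) (G : Set (Fin d → ℕ)) : Prop :=
  ∃ P : IntervalPartition n w, G = gridOf n d k w P

/-- Two entries of `[n]^d` are neighbors if `∑ i, |x i − y i| = 1`. -/
def Neighbor {d : ℕ} (x y : Fin d → ℕ) : Prop :=
  (∑ i, Nat.dist (x i) (y i)) = 1

/-- A `G`-block: a connected component of the neighborhood graph on `[n]^d \ G`. -/
def IsBlock (n d : ℕ) (G B : Set (Fin d → ℕ)) : Prop :=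
  B.Nonempty ∧ B ⊆ cube n d \ G ∧
    (∀ x ∈ B, ∀ y ∈ B,
      Relation.ReflTransGen
        (fun a b => a ∈ cube n d \ G ∧ b ∈ cube n d \ G ∧ Neighbor a b) x y) ∧
    (∀ x ∈ B, ∀ y, y ∈ cube n d \ G → Neighbor x y → y ∈ B)

/-- The closure `B̄` of a block `B`. -/
def blockClosure (n d k : ℕ) (B : Set (Fin d → ℕ)) : Set (Fin d → ℕ) :=
  {x ∈ cube n d | ∃ y ∈ B, ∀ i, Nat.dist (x i) (y i) < k}

/-- The boundary `∂B = B̄ \ B` of a block `B`. -/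
def blockBoundary (n d k : ℕ) (B : Set (Fin d → ℕ)) : Set (Fin d → ℕ) :=
  blockClosure n d k B \ B

/-! Adjacent free coordinate values (those outside every `I_j[:k-1]`) lie in the same interval
`I_j`, because consecutive free runs are separated by the `k - 1 ≥ 1` values of a grid line.
Hence a block is a box `∏ I_{j_i}[k:]`, with sides of length at most `w + 2 - k`. Its closure
lies in the box enlarged by `k - 1` on every side, with sides at most `w + k`, and its boundary
in the difference of the two boxes, which is covered by `d` slabs of thickness `2 (k - 1)`. -/

lemma mem_takeSmallest_Icc {a b ℓ x : ℕ} :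
    x ∈ takeSmallest (Icc a b) ℓ ↔ x ∈ Icc a b ∧ x < a + ℓ := by
  have hcard : #((Icc a b).filter fun y => y ≤ x) = min b x + 1 - a := by
    rw [← Nat.card_Icc a (min b x)]
    congr 1
    ext y
    simp only [mem_filter, mem_Icc]
    omega
  simp only [takeSmallest, mem_filter, hcard, mem_Icc]
  omega

namespace IntervalPartition

variable {n w : ℕ} (P : IntervalPartition n w) (k : ℕ)

def IsFree (v : ℕ) : Prop :=
  v ∈ Icc 1 n ∧ ∀ j, v ∉ takeSmallest (P.I j) (k - 1)

variable {P k}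

lemma eq_of_mem {j j' : Fin P.t} {v : ℕ} (h : v ∈ P.I j) (h' : v ∈ P.I j') : j = j' := by
  rcases lt_trichotomy j j' with hlt | heq | hgt
  · exact absurd (P.ordered j j' hlt v h v h') (lt_irrefl v)
  · exact heq
  · exact absurd (P.ordered j' j hgt v h' v h) (lt_irrefl v)

lemma mem_Icc_one_of_mem {j : Fin P.t} {v : ℕ} (hv : v ∈ P.I j) : v ∈ Icc 1 n := by
  obtain ⟨a, b, ha, -, hb, hI⟩ := P.interval j
  rw [hI, mem_Icc] at hv
  exact mem_Icc.2 ⟨ha.trans hv.1, hv.2.trans hb⟩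

lemma isFree_iff_of_mem {j : Fin P.t} {a b v : ℕ} (hI : P.I j = Icc a b) (hv : v ∈ P.I j) :
    P.IsFree k v ↔ a + (k - 1) ≤ v := by
  have hv' := hv
  rw [hI] at hv'
  constructor
  · intro hfree
    have := hfree.2 j
    rw [hI, mem_takeSmallest_Icc] at this
    exact not_lt.1 fun hlt => this ⟨hv', hlt⟩
  · intro hle
    refine ⟨mem_Icc_one_of_mem hv, fun j' hj' => ?_⟩
    obtain rfl := eq_of_mem hv (mem_of_mem_filter v hj')
    rw [hI, mem_takeSmallest_Icc] at hj'
    exact absurd hj'.2 (not_lt.2 hle)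

lemma mem_Icc_of_isFree_of_dist_le_one (hk : 2 ≤ k) {j : Fin P.t} {a b u v : ℕ}
    (hI : P.I j = Icc a b) (hu : u ∈ Set.Icc (a + (k - 1)) b) (hv : P.IsFree k v)
    (huv : Nat.dist u v ≤ 1) : v ∈ Set.Icc (a + (k - 1)) b := by
  obtain ⟨j', hvj'⟩ := P.cover v hv.1
  obtain ⟨a', b', -, hab', -, hI'⟩ := P.interval j'
  have hfree' := (isFree_iff_of_mem hI' hvj').1 hv
  have hau : a ≤ u ∧ u ≤ b := by simp only [Set.mem_Icc] at hu; omega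
  have huj : u ∈ P.I j := by rw [hI, mem_Icc]; exact hau
  have haj : a ∈ P.I j := by rw [hI, mem_Icc]; omega
  have haj' : a' ∈ P.I j' := by rw [hI', mem_Icc]; omega
  simp only [Nat.dist, Set.mem_Icc] at hu huv ⊢
  rcases lt_trichotomy j' j with hlt | rfl | hgt
  · have := P.ordered j' j hlt v hvj' a haj
    omega
  · have hvI := hvj'
    rw [hI, mem_Icc] at hvI
    have := (isFree_iff_of_mem hI hvj').1 hv
    omega
  · have := P.ordered j j' hgt u huj a' haj'
    omega

end IntervalPartition

open IntervalPartition

lemma mem_cube_sdiff_gridOf {n d k w : ℕ} {P : IntervalPartition n w} {x : Fin d → ℕ} :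
    x ∈ cube n d \ gridOf n d k w P ↔ ∀ i, P.IsFree k (x i) := by
  simp only [gridOf, cube, IsFree, Set.mem_sdiff, Set.mem_ofPred_eq, mem_Icc]
  constructor
  · rintro ⟨hx, hgrid⟩ i
    exact ⟨hx i, fun j hj => hgrid ⟨hx, i, j, hj⟩⟩
  · intro hx
    exact ⟨fun i => (hx i).1, fun ⟨_, i, j, hj⟩ => (hx i).2 j hj⟩

lemma Neighbor.dist_le_one {d : ℕ} {x y : Fin d → ℕ} (h : Neighbor x y) (i : Fin d) :
    Nat.dist (x i) (y i) ≤ 1 :=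
  h ▸ single_le_sum (f := fun i => Nat.dist (x i) (y i)) (fun _ _ => Nat.zero_le _) (mem_univ i)

lemma neighbor_update_of_dist_eq_one {d : ℕ} {y : Fin d → ℕ} {i : Fin d} {v : ℕ}
    (hv : Nat.dist v (y i) = 1) : Neighbor (Function.update y i v) y := by
  unfold Neighbor
  rw [sum_eq_single_of_mem i (mem_univ i), Function.update_self, hv]
  intro j _ hji
  rw [Function.update_of_ne hji, Nat.dist_self]

lemma reflTransGen_neighbor_of_mem_Icc {d : ℕ} {l r x y : Fin d → ℕ}
    (hx : x ∈ Set.Icc l r) (hy : y ∈ Set.Icc l r) :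
    Relation.ReflTransGen
      (fun a b => a ∈ Set.Icc l r ∧ b ∈ Set.Icc l r ∧ Neighbor a b) x y := by
  suffices ∀ m, ∀ y ∈ Set.Icc l r, ∑ i, Nat.dist (x i) (y i) = m →
      Relation.ReflTransGen
        (fun a b => a ∈ Set.Icc l r ∧ b ∈ Set.Icc l r ∧ Neighbor a b) x y from
    this _ y hy rfl
  intro m
  induction m using Nat.strong_induction_on with
  | _ m ih =>
  intro y hy hm
  by_cases hxy : x = y
  · exact hxy ▸ Relation.ReflTransGen.refl
  obtain ⟨i, hi⟩ := Function.ne_iff.1 hxy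
  obtain ⟨v, hv_dist, hv_closer, hv_mem⟩ : ∃ v, Nat.dist v (y i) = 1 ∧
      Nat.dist (x i) v < Nat.dist (x i) (y i) ∧ v ∈ Set.Icc (l i) (r i) := by
    have hxi : l i ≤ x i ∧ x i ≤ r i := ⟨hx.1 i, hx.2 i⟩
    have hyi : l i ≤ y i ∧ y i ≤ r i := ⟨hy.1 i, hy.2 i⟩
    rcases lt_or_gt_of_ne hi with hlt | hgt
    · exact ⟨y i - 1, by simp only [Nat.dist]; omega, by simp only [Nat.dist]; omega,
        by simp only [Set.mem_Icc]; omega⟩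
    · exact ⟨y i + 1, by simp only [Nat.dist]; omega, by simp only [Nat.dist]; omega,
        by simp only [Set.mem_Icc]; omega⟩
  have hy' : Function.update y i v ∈ Set.Icc l r :=
    ⟨le_update_iff.2 ⟨hv_mem.1, fun j _ => hy.1 j⟩, update_le_iff.2 ⟨hv_mem.2, fun j _ => hy.2 j⟩⟩
  have hsum : ∑ j, Nat.dist (x j) (Function.update y i v j) < m := by
    rw [← hm]
    refine sum_lt_sum (fun j _ => ?_) ⟨i, mem_univ i, by rwa [Function.update_self]⟩
    rcases eq_or_ne j i with rfl | hji
    · rw [Function.update_self]; exact hv_closer.le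
    · rw [Function.update_of_ne hji]
  exact (ih _ hsum _ hy' rfl).tail ⟨hy', hy, neighbor_update_of_dist_eq_one hv_dist⟩

lemma IsBlock.eq_of_mem {n d : ℕ} {G B X : Set (Fin d → ℕ)} (hB : IsBlock n d G B)
    {x₀ : Fin d → ℕ} (hx₀B : x₀ ∈ B) (hx₀X : x₀ ∈ X) (hXS : X ⊆ cube n d \ G)
    (hXconn : ∀ y ∈ X, Relation.ReflTransGen (fun a b => a ∈ X ∧ b ∈ X ∧ Neighbor a b) x₀ y)
    (hXclosed : ∀ x ∈ X, ∀ y ∈ cube n d \ G, Neighbor x y → y ∈ X) : B = X := by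
  ext y
  constructor
  · intro hy
    have hpath := hB.2.2.1 x₀ hx₀B y hy
    clear hy
    induction hpath with
    | refl => exact hx₀X
    | tail _ hstep ih => exact hXclosed _ ih _ hstep.2.1 hstep.2.2
  · intro hy
    have hpath := hXconn y hy
    clear hy
    induction hpath with
    | refl => exact hx₀B
    | tail _ hstep ih => exact hB.2.2.2 _ ih _ (hXS hstep.2.1) hstep.2.2

lemma IsBlock.eq_Icc_of_gridOf {n d k w : ℕ} {P : IntervalPartition n w} {B : Set (Fin d → ℕ)}
    (hk : 2 ≤ k) (hB : IsBlock n d (gridOf n d k w P) B) :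
    ∃ a b : Fin d → ℕ, (∀ i, a i + (k - 1) ≤ b i ∧ b i + 1 - a i ≤ w + 1) ∧
      B = Set.Icc (fun i => a i + (k - 1)) b := by
  obtain ⟨x₀, hx₀⟩ := hB.1
  have hfree : ∀ i, P.IsFree k (x₀ i) := mem_cube_sdiff_gridOf.1 (hB.2.1 hx₀)
  choose j hj using fun i => P.cover (x₀ i) (hfree i).1
  choose a b _ _ _ hI using fun i => P.interval (j i)
  have hx₀box : ∀ i, x₀ i ∈ Set.Icc (a i + (k - 1)) (b i) := fun i => by
    have := hj i
    rw [hI i, mem_Icc] at this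
    exact ⟨(isFree_iff_of_mem (hI i) (hj i)).1 (hfree i), this.2⟩
  have hmem_Icc : ∀ z : Fin d → ℕ,
      z ∈ Set.Icc (fun i => a i + (k - 1)) b ↔ ∀ i, z i ∈ Set.Icc (a i + (k - 1)) (b i) := by
    intro z
    rw [← Set.pi_univ_Icc, Set.mem_univ_pi]
  refine ⟨a, b, fun i => ⟨(hx₀box i).1.trans (hx₀box i).2, ?_⟩,
    hB.eq_of_mem hx₀ ((hmem_Icc x₀).2 hx₀box) ?_ ?_ ?_⟩
  · have := P.size (j i)
    rw [hI i, Nat.card_Icc] at this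
    omega
  · intro z hz
    refine mem_cube_sdiff_gridOf.2 fun i => ?_
    have hzi := (hmem_Icc z).1 hz i
    have hzj : z i ∈ P.I (j i) := by
      rw [hI i, mem_Icc]
      exact ⟨(Nat.le_add_right _ _).trans hzi.1, hzi.2⟩
    exact (isFree_iff_of_mem (hI i) hzj).2 hzi.1
  · exact fun y hy => reflTransGen_neighbor_of_mem_Icc ((hmem_Icc x₀).2 hx₀box) hy
  · intro z hz y hy hzy
    exact (hmem_Icc y).2 fun i => mem_Icc_of_isFree_of_dist_le_one hk (hI i) ((hmem_Icc z).1 hz i)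
      (mem_cube_sdiff_gridOf.1 hy i) (hzy.dist_le_one i)

lemma blockClosure_Icc_subset {n d k : ℕ} (a b : Fin d → ℕ) :
    blockClosure n d k (Set.Icc (fun i => a i + (k - 1)) b) ⊆ Set.Icc a fun i => b i + (k - 1) := by
  rintro x ⟨-, y, ⟨hay, hyb⟩, hxy⟩
  refine ⟨fun i => ?_, fun i => ?_⟩ <;>
  · have := hay i
    have := hyb i
    have := hxy i
    simp only [Nat.dist] at *
    omega

section CardPi

variable {ι : Type*} [Fintype ι] [DecidableEq ι]

/-- The difference of two product sets is covered by the `card ι` slabs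
`∏_{j ≠ i} T j × (T i \ S i)`. -/
lemma card_piFinset_sdiff_le {α : ι → Type*} [∀ i, DecidableEq (α i)] (S T : ∀ i, Finset (α i))
    {p q : ℕ} (hp : ∀ i, #(T i \ S i) ≤ p) (hq : ∀ i, #(T i) ≤ q) :
    #(Fintype.piFinset T \ Fintype.piFinset S) ≤
      Fintype.card ι * (p * q ^ (Fintype.card ι - 1)) := by
  have hcover : Fintype.piFinset T \ Fintype.piFinset S ⊆
      univ.biUnion fun i => Fintype.piFinset (Function.update T i (T i \ S i)) := by
    intro x hx
    rw [mem_sdiff, Fintype.mem_piFinset, Fintype.mem_piFinset, not_forall] at hx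
    obtain ⟨hT, i, hi⟩ := hx
    refine mem_biUnion.2 ⟨i, mem_univ i, Fintype.mem_piFinset.2 fun j => ?_⟩
    rcases eq_or_ne j i with rfl | hji
    · rw [Function.update_self]
      exact mem_sdiff.2 ⟨hT j, hi⟩
    · rw [Function.update_of_ne hji]
      exact hT j
  have hslab : ∀ i, #(Fintype.piFinset (Function.update T i (T i \ S i))) ≤
      p * q ^ (Fintype.card ι - 1) := by
    intro i
    rw [Fintype.card_piFinset, ← mul_prod_erase univ _ (mem_univ i), Function.update_self]
    refine Nat.mul_le_mul (hp i) ?_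
    calc ∏ j ∈ univ.erase i, #(Function.update T i (T i \ S i) j)
        ≤ q ^ #(univ.erase i) := prod_le_pow_card _ _ _ fun j hj => by
          rw [Function.update_of_ne (ne_of_mem_erase hj)]
          exact hq j
      _ = q ^ (Fintype.card ι - 1) := by rw [card_erase_of_mem (mem_univ i), card_univ]
  calc #(Fintype.piFinset T \ Fintype.piFinset S)
      ≤ ∑ i, #(Fintype.piFinset (Function.update T i (T i \ S i))) :=
        (card_le_card hcover).trans card_biUnion_le
    _ ≤ ∑ _i : ι, p * q ^ (Fintype.card ι - 1) := sum_le_sum fun i _ => hslab i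
    _ = Fintype.card ι * (p * q ^ (Fintype.card ι - 1)) := by
        rw [sum_const, card_univ, smul_eq_mul]

lemma ncard_Icc_le_pow {l r : ι → ℕ} {q : ℕ} (h : ∀ i, r i + 1 - l i ≤ q) :
    (Set.Icc l r).ncard ≤ q ^ Fintype.card ι := by
  rw [← coe_Icc, Set.ncard_coe_finset, Pi.card_Icc, ← card_univ]
  exact prod_le_pow_card _ _ _ fun i _ => (Nat.card_Icc _ _).trans_le (h i)

lemma ncard_Icc_sdiff_Icc_le {a b : ι → ℕ} {m q : ℕ} (hab : ∀ i, a i + m ≤ b i + 1)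
    (hq : ∀ i, b i + m + 1 - a i ≤ q) :
    (Set.Icc a (fun i => b i + m) \ Set.Icc (fun i => a i + m) b).ncard ≤
      Fintype.card ι * (2 * m * q ^ (Fintype.card ι - 1)) := by
  rw [← coe_Icc, ← coe_Icc, ← coe_sdiff, Set.ncard_coe_finset, Pi.Icc_eq, Pi.Icc_eq]
  refine card_piFinset_sdiff_le _ _ (fun i => ?_) (fun i => (Nat.card_Icc _ _).trans_le (hq i))
  rw [card_sdiff_of_subset (Icc_subset_Icc (Nat.le_add_right _ _) (Nat.le_add_right _ _)),
    Nat.card_Icc, Nat.card_Icc]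
  have := hab i
  omega

end CardPi

theorem block_size_bounds_general (n d k w : ℕ) (hk : 2 ≤ k) (G B : Set (Fin d → ℕ))
    (hG : IsGrid n d k w G) (hB : IsBlock n d G B) :
    B.ncard ≤ (w + 2 - k) ^ d ∧
    (blockClosure n d k B).ncard ≤ (w + k) ^ d ∧
    (blockBoundary n d k B).ncard ≤ 2 * d * (k - 1) * (w + k) ^ (d - 1) := by
  obtain ⟨P, rfl⟩ := hG
  obtain ⟨a, b, hab, rfl⟩ := hB.eq_Icc_of_gridOf hk
  have hinner : ∀ i, b i + 1 - (a i + (k - 1)) ≤ w + 2 - k := fun i => by have := hab i; omega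
  have houter : ∀ i, b i + (k - 1) + 1 - a i ≤ w + k := fun i => by have := hab i; omega
  have hclosure := blockClosure_Icc_subset (n := n) (k := k) a b
  refine ⟨by simpa using ncard_Icc_le_pow hinner, ?_, ?_⟩
  · calc _ ≤ (Set.Icc a fun i => b i + (k - 1)).ncard :=
          Set.ncard_le_ncard hclosure (Set.finite_Icc _ _)
      _ ≤ (w + k) ^ d := by simpa using ncard_Icc_le_pow houter
  · calc _ ≤ (Set.Icc a (fun i => b i + (k - 1)) \ Set.Icc (fun i => a i + (k - 1)) b).ncard :=
          Set.ncard_le_ncard (Set.sdiff_subset_sdiff_left hclosure) (Set.finite_Icc _ _).sdiff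
      _ ≤ d * (2 * (k - 1) * (w + k) ^ (d - 1)) := by
          simpa using ncard_Icc_sdiff_Icc_le (fun i => by have := hab i; omega) houter
      _ = 2 * d * (k - 1) * (w + k) ^ (d - 1) := by ring

/-- Size bounds for a `G`-block, its closure and its boundary:
`|B| ≤ (w+2−k)^d`, `|B̄| ≤ (w+k)^d`, `|∂B| ≤ 2d(k−1)(w+k)^(d−1)`. -/
theorem block_size_bounds (n d k w : ℕ) (hd : 1 ≤ d) (hk : 2 ≤ k)
    (hkw : k ≤ w) (hwn : w ≤ n) (G B : Set (Fin d → ℕ))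
    (hG : IsGrid n d k w G) (hB : IsBlock n d G B) :
    B.ncard ≤ (w + 2 - k) ^ d ∧
    (blockClosure n d k B).ncard ≤ (w + k) ^ d ∧
    (blockBoundary n d k B).ncard ≤ 2 * d * (k - 1) * (w + k) ^ (d - 1) :=
  block_size_bounds_general n d k w hk G B hG hB
end

section
/- Fix a k-local property P = P(F) of [n]^d-arrays over Σ, an [n]^d-array A over Σ, and an (n,d,k,w)-system of grids (G_0,...,G_r), and let W be the family of all maximal (P,A)-witness blocks. Then every F-copy in A lies inside ⋃_{B∈W} B̄. -/
open Finset

/-- A valid location of a width-`k` subarray in `[n]^d`: an element of `[n−k+1]^d`. -/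
def ValidLoc (n d k : ℕ) (a : Fin d → ℕ) : Prop :=
  ∀ i, 1 ≤ a i ∧ a i ≤ n - k + 1

/-- The width-`k` box with lowest corner `a`: `{a_1,…,a_1+k−1} × ⋯ × {a_d,…,a_d+k−1}`. -/
def kbox (d k : ℕ) (a : Fin d → ℕ) : Set (Fin d → ℕ) :=
  {x | ∀ i, a i ≤ x i ∧ x i ≤ a i + k - 1}

/-- Some forbidden pattern of `F` occurs as a consecutive subarray of `A` at location `a`;
patterns are compared on `[k]^d`. -/
def HasCopyAt {σ : Type*} (d k : ℕ) (F : Set ((Fin d → ℕ) → σ))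
    (A : (Fin d → ℕ) → σ) (a : Fin d → ℕ) : Prop :=
  ∃ S ∈ F, ∀ j : Fin d → ℕ, (∀ i, 1 ≤ j i ∧ j i ≤ k) →
    A (fun i => a i + j i - 1) = S j

/-- `A` contains an `F`-copy lying inside the set `X`. -/
def HasCopyIn {σ : Type*} (n d k : ℕ) (F : Set ((Fin d → ℕ) → σ))
    (A : (Fin d → ℕ) → σ) (X : Set (Fin d → ℕ)) : Prop :=
  ∃ a, ValidLoc n d k a ∧ HasCopyAt d k F A a ∧ kbox d k a ⊆ X

/-- `A` satisfies the `k`-local property `P(F)`: it contains no `F`-copy. -/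
def SatisfiesP {σ : Type*} (n d k : ℕ) (F : Set ((Fin d → ℕ) → σ))
    (A : (Fin d → ℕ) → σ) : Prop :=
  ¬ ∃ a, ValidLoc n d k a ∧ HasCopyAt d k F A a

/-- `A` is `ε`-far from `P(F)`: every array satisfying `P(F)` differs from `A`
in at least `ε·n^d` entries of `[n]^d`. -/
def FarFrom {σ : Type*} (n d k : ℕ) (F : Set ((Fin d → ℕ) → σ)) (ε : ℝ)
    (A : (Fin d → ℕ) → σ) : Prop :=
  ∀ A' : (Fin d → ℕ) → σ, SatisfiesP n d k F A' →
    ε * (n : ℝ) ^ d ≤ ({x | x ∈ cube n d ∧ A x ≠ A' x}).ncard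

/-- A block `B` is `(P,A)`-unrepairable: every array agreeing with `A` on `∂B`
(including `A` itself) contains an `F`-copy lying inside `B̄`. -/
def Unrepairable {σ : Type*} (n d k : ℕ) (F : Set ((Fin d → ℕ) → σ))
    (A : (Fin d → ℕ) → σ) (B : Set (Fin d → ℕ)) : Prop :=
  ∀ A' : (Fin d → ℕ) → σ, (∀ x ∈ blockBoundary n d k B, A' x = A x) →
    HasCopyIn n d k F A' (blockClosure n d k B)

/-- `r = ⌊log₂(n/w)⌋`. -/
def sysR (n w : ℕ) : ℕ := Nat.log 2 (n / w)

/-- An `(n,d,k,w)`-system of grids `(G_0, …, G_r)` with `r = ⌊log₂(n/w)⌋`: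
`G_i ∈ 𝒢(n,d,k,⌊n/2^(r−i)⌋)` and `G_0 ⊇ G_1 ⊇ ⋯ ⊇ G_r`. -/
structure GridSystem (n d k w : ℕ) where
  G : ℕ → Set (Fin d → ℕ)
  isGrid : ∀ i ≤ sysR n w, IsGrid n d k (n / 2 ^ (sysR n w - i)) (G i)
  nested : ∀ i j : ℕ, j ≤ i → i ≤ sysR n w → G i ⊆ G j

/-- A `G_i`-block `B` is a `(P,A)`-witness: either `i = 0` and `A` contains an `F`-copy
inside `B̄`, or `i > 0` and `B` is `(P,A)`-unrepairable. -/
def IsWitness {σ : Type*} (n d k w : ℕ) (S : GridSystem n d k w)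
    (F : Set ((Fin d → ℕ) → σ)) (A : (Fin d → ℕ) → σ)
    (i : ℕ) (B : Set (Fin d → ℕ)) : Prop :=
  i ≤ sysR n w ∧ IsBlock n d (S.G i) B ∧
    ((i = 0 ∧ HasCopyIn n d k F A (blockClosure n d k B)) ∨
      (0 < i ∧ Unrepairable n d k F A B))

/-- A witness is maximal if all of its ancestors (blocks of coarser grids containing it)
are `(P,A)`-repairable. -/
def IsMaximalWitness {σ : Type*} (n d k w : ℕ) (S : GridSystem n d k w)
    (F : Set ((Fin d → ℕ) → σ)) (A : (Fin d → ℕ) → σ)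
    (i : ℕ) (B : Set (Fin d → ℕ)) : Prop :=
  IsWitness n d k w S F A i B ∧
    ∀ j, i < j → j ≤ sysR n w → ∀ B', IsBlock n d (S.G j) B' → B ⊆ B' →
      ¬ Unrepairable n d k F A B'

/-- The family `W` of all maximal `(P,A)`-witness blocks. -/
def MaxWitnessFamily {σ : Type*} (n d k w : ℕ) (S : GridSystem n d k w)
    (F : Set ((Fin d → ℕ) → σ)) (A : (Fin d → ℕ) → σ) :
    Set (Set (Fin d → ℕ)) :=
  {B | ∃ i, IsMaximalWitness n d k w S F A i B}

/-- `Par(B)` for a `G_i`-block `B`: the `G_{i+1}`-block containing `B` if `i < r`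
(expressed as the union of all such blocks, of which there is exactly one), and
`[n]^d` for `i = r`. -/
def parentSet (n d k w : ℕ) (S : GridSystem n d k w) (i : ℕ)
    (B : Set (Fin d → ℕ)) : Set (Fin d → ℕ) :=
  if i = sysR n w then cube n d
  else ⋃₀ {B' | IsBlock n d (S.G (i + 1)) B' ∧ B ⊆ B'}

/-!
A width-`k` window of `[n]` always contains a coordinate outside the first `k - 1` elements of
every interval of a partition of width at least `k`: either its top element lies at least `k - 1`
steps into its interval, or the window crosses into that interval from the previous one, whose
last element is such a coordinate. Hence the box of every `F`-copy contains an entry off `G_0`,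
and the `G_0`-block of that entry has the box in its closure, so it is a witness. Replacing a
witness by an unrepairable ancestor as long as there is one ends at a maximal witness, and
closures only grow along the way.
-/

lemma mem_takeSmallest_Icc_s10 {α β ℓ x : ℕ} (hαx : α ≤ x) (hxβ : x ≤ β) :
    x ∈ takeSmallest (Finset.Icc α β) ℓ ↔ x + 1 ≤ α + ℓ := by
  have hle : (Finset.Icc α β).filter (· ≤ x) = Finset.Icc α x := by
    ext y
    simp only [Finset.mem_filter, Finset.mem_Icc]
    omega
  simp only [takeSmallest, Finset.mem_filter, Finset.mem_Icc, hle, Nat.card_Icc]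
  omega

namespace IntervalPartition

variable {n w : ℕ} (P : IntervalPartition n w)

lemma eq_of_mem_of_mem {j j' : Fin P.t} {x : ℕ} (hx : x ∈ P.I j) (hx' : x ∈ P.I j') :
    j = j' := by
  by_contra hne
  rcases lt_or_gt_of_ne hne with hlt | hlt
  · exact lt_irrefl x (P.ordered j j' hlt x hx x hx')
  · exact lt_irrefl x (P.ordered j' j hlt x hx' x hx)

lemma exists_mem_Icc {x : ℕ} (hx1 : 1 ≤ x) (hxn : x ≤ n) :
    ∃ j α β, P.I j = Finset.Icc α β ∧ α ≤ x ∧ x ≤ β ∧ w ≤ β + 1 - α := by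
  obtain ⟨j, hj⟩ := P.cover x (Finset.mem_Icc.2 ⟨hx1, hxn⟩)
  obtain ⟨α, β, -, -, -, hI⟩ := P.interval j
  have hcard : w ≤ (P.I j).card := by rcases P.size j with h | h <;> omega
  rw [hI, Finset.mem_Icc] at hj
  rw [hI, Nat.card_Icc] at hcard
  exact ⟨j, α, β, hI, hj.1, hj.2, hcard⟩

lemma notMem_takeSmallest {j : Fin P.t} {α β x ℓ : ℕ} (hI : P.I j = Finset.Icc α β)
    (hαx : α + ℓ ≤ x) (hxβ : x ≤ β) (j' : Fin P.t) : x ∉ takeSmallest (P.I j') ℓ := by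
  intro hx
  have hj : j' = j :=
    P.eq_of_mem_of_mem (Finset.filter_subset _ _ hx) (by rw [hI, Finset.mem_Icc]; omega)
  rw [hj, hI, mem_takeSmallest_Icc_s10 (by omega) hxβ] at hx
  omega

lemma exists_notMem_takeSmallest {k a : ℕ} (hk : 1 ≤ k) (hkw : k ≤ w) (ha : 1 ≤ a)
    (han : a + k - 1 ≤ n) :
    ∃ c, a ≤ c ∧ c ≤ a + k - 1 ∧ ∀ j, c ∉ takeSmallest (P.I j) (k - 1) := by
  obtain ⟨j, α, β, hI, hα, hβ, -⟩ := P.exists_mem_Icc (x := a + k - 1) (by omega) han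
  by_cases hαa : α ≤ a
  · exact ⟨a + k - 1, by omega, le_rfl, P.notMem_takeSmallest hI (by omega) hβ⟩
  obtain ⟨j', α', β', hI', hα', hβ', hw⟩ := P.exists_mem_Icc (x := α - 1) (by omega) (by omega)
  have hlast : β' < α := by
    by_contra hαβ'
    have hj : j' = j :=
      P.eq_of_mem_of_mem (x := α) (by rw [hI', Finset.mem_Icc]; omega)
        (by rw [hI, Finset.mem_Icc]; omega)
    have hmem : α - 1 ∈ P.I j := hj ▸ (by rw [hI', Finset.mem_Icc]; omega)
    rw [hI, Finset.mem_Icc] at hmem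
    omega
  exact ⟨α - 1, by omega, by omega, P.notMem_takeSmallest hI' (by omega) hβ'⟩

end IntervalPartition

lemma le_div_two_pow_sysR {n w : ℕ} (hwn : w ≤ n) : w ≤ n / 2 ^ sysR n w := by
  rcases Nat.eq_zero_or_pos w with rfl | hw
  · exact Nat.zero_le _
  have hpow : 2 ^ sysR n w ≤ n / w :=
    Nat.pow_log_le_self 2 (Nat.div_pos hwn hw).ne'
  rw [Nat.le_div_iff_mul_le (Nat.two_pow_pos _)]
  calc w * 2 ^ sysR n w ≤ w * (n / w) := Nat.mul_le_mul_left w hpow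
    _ ≤ n := Nat.mul_div_le n w

lemma kbox_subset_cube {n d k : ℕ} {a : Fin d → ℕ} (hkn : k ≤ n) (ha : ValidLoc n d k a) :
    kbox d k a ⊆ cube n d := fun x hx i => by
  have := ha i
  have := hx i
  omega

lemma exists_mem_kbox_notMem_gridOf {n d k w : ℕ} (P : IntervalPartition n w) (hk : 1 ≤ k)
    (hkw : k ≤ w) (hkn : k ≤ n) {a : Fin d → ℕ} (ha : ValidLoc n d k a) :
    ∃ x ∈ kbox d k a, x ∈ cube n d \ gridOf n d k w P := by
  have hcol (i : Fin d) := P.exists_notMem_takeSmallest hk hkw (ha i).1 (by have := ha i; omega)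
  choose x hxa hxk hx using hcol
  have hxbox : x ∈ kbox d k a := fun i => ⟨hxa i, hxk i⟩
  exact ⟨x, hxbox, kbox_subset_cube hkn ha hxbox, fun ⟨_, i, j, hxj⟩ => hx i j hxj⟩

lemma Neighbor.symm {d : ℕ} {x y : Fin d → ℕ} (h : Neighbor x y) : Neighbor y x := by
  simpa only [Neighbor, Nat.dist_comm] using h

lemma exists_isBlock_mem {n d : ℕ} {G : Set (Fin d → ℕ)} {x : Fin d → ℕ}
    (hx : x ∈ cube n d \ G) : ∃ B, IsBlock n d G B ∧ x ∈ B := by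
  set R := fun a b => a ∈ cube n d \ G ∧ b ∈ cube n d \ G ∧ Neighbor a b
  have : Std.Symm R := ⟨fun _ _ ⟨ha, hb, hab⟩ => ⟨hb, ha, hab.symm⟩⟩
  refine ⟨{y | y ∈ cube n d \ G ∧ Relation.ReflTransGen R x y}, ⟨⟨x, hx, .refl⟩,
    fun y hy => hy.1, ?_, ?_⟩, hx, .refl⟩
  · rintro y ⟨-, hxy⟩ z ⟨-, hxz⟩
    exact (symm hxy).trans hxz
  · rintro y ⟨hy, hxy⟩ z hz hyz
    exact ⟨hz, hxy.tail ⟨hy, hz, hyz⟩⟩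

lemma kbox_subset_blockClosure {n d k : ℕ} {a x : Fin d → ℕ} {B : Set (Fin d → ℕ)}
    (hbox : kbox d k a ⊆ cube n d) (hxbox : x ∈ kbox d k a) (hxB : x ∈ B) :
    kbox d k a ⊆ blockClosure n d k B := fun z hz =>
  ⟨hbox hz, x, hxB, fun i => by
    have := hz i
    have := hxbox i
    have := hbox hz i
    have : Nat.dist (z i) (x i) = z i - x i + (x i - z i) := rfl
    omega⟩

lemma blockClosure_mono {n d k : ℕ} {B B' : Set (Fin d → ℕ)} (h : B ⊆ B') :
    blockClosure n d k B ⊆ blockClosure n d k B' :=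
  fun _ ⟨hx, y, hy, hxy⟩ => ⟨hx, y, h hy, hxy⟩

lemma IsWitness.exists_maximal_blockClosure_subset {n d k w : ℕ} {σ : Type*}
    {S : GridSystem n d k w} {F : Set ((Fin d → ℕ) → σ)} {A : (Fin d → ℕ) → σ} {i : ℕ}
    {B : Set (Fin d → ℕ)} (hB : IsWitness n d k w S F A i B) :
    ∃ B' ∈ MaxWitnessFamily n d k w S F A, blockClosure n d k B ⊆ blockClosure n d k B' := by
  induction hm : sysR n w - i using Nat.strong_induction_on generalizing i B with
  | _ m ih =>
  by_cases hmax : IsMaximalWitness n d k w S F A i B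
  · exact ⟨B, ⟨i, hmax⟩, subset_rfl⟩
  obtain ⟨j, hij, hjr, B', hB', hBB', hunrep⟩ : ∃ j, i < j ∧ j ≤ sysR n w ∧ ∃ B',
      IsBlock n d (S.G j) B' ∧ B ⊆ B' ∧ Unrepairable n d k F A B' := by
    simpa [IsMaximalWitness, hB] using hmax
  have hir := hB.1
  obtain ⟨B'', hB'', hcl⟩ :=
    ih (sysR n w - j) (by omega) ⟨hjr, hB', Or.inr ⟨by omega, hunrep⟩⟩ rfl
  exact ⟨B'', hB'', (blockClosure_mono hBB').trans hcl⟩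

theorem copies_in_maximal_witness_closures_general (n d k w : ℕ) (hk : 2 ≤ k)
    (hkw : k ≤ w) (hwn : w ≤ n) {σ : Type*} (F : Set ((Fin d → ℕ) → σ))
    (A : (Fin d → ℕ) → σ) (S : GridSystem n d k w) :
    ∀ a : Fin d → ℕ, ValidLoc n d k a → HasCopyAt d k F A a →
      kbox d k a ⊆ ⋃ B ∈ MaxWitnessFamily n d k w S F A, blockClosure n d k B := by
  intro a ha hcopy
  have hkn : k ≤ n := hkw.trans hwn
  obtain ⟨P, hP⟩ := S.isGrid 0 (Nat.zero_le _)
  obtain ⟨x, hxbox, hx⟩ := exists_mem_kbox_notMem_gridOf P (by omega)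
    (hkw.trans (le_div_two_pow_sysR hwn)) hkn ha
  obtain ⟨B, hB, hxB⟩ := exists_isBlock_mem (hP ▸ hx)
  have hbox := kbox_subset_blockClosure (kbox_subset_cube hkn ha) hxbox hxB
  obtain ⟨B', hB', hcl⟩ :=
    IsWitness.exists_maximal_blockClosure_subset (S := S) (F := F) (A := A)
      ⟨Nat.zero_le _, hB, Or.inl ⟨rfl, a, ha, hcopy, hbox⟩⟩
  exact hbox.trans (hcl.trans (Set.subset_biUnion_of_mem hB'))

/-- Every `F`-copy in `A` lies inside `⋃_{B ∈ W} B̄`, where `W` is the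
family of all maximal `(P,A)`-witness blocks. -/
theorem copies_in_maximal_witness_closures (n d k w : ℕ) (hd : 1 ≤ d) (hk : 2 ≤ k)
    (hkw : k ≤ w) (hwn : w ≤ n) {σ : Type*} (F : Set ((Fin d → ℕ) → σ))
    (A : (Fin d → ℕ) → σ) (S : GridSystem n d k w) :
    ∀ a : Fin d → ℕ, ValidLoc n d k a → HasCopyAt d k F A a →
      kbox d k a ⊆ ⋃ B ∈ MaxWitnessFamily n d k w S F A, blockClosure n d k B :=
  copies_in_maximal_witness_closures_general n d k w hk hkw hwn F A S
end
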